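/- arXiv:2408.06978 — 2 statements merged into one kernel-verified Lean document; each statement's English description precedes it below -/
import Mathlib

section
/- Let p, q ∈ [1,∞), r ∈ [1,∞], and let Y be a stochastic process with ‖Y‖_{p,q,r,[0,T]} < ∞. Then Y is L^{q,r}_•-regulated: for every s ∈ [0,T), the map [s,T] ∋ t ↦ δY_{s,t} admits left and right limits in L^{q,r}_s; that is, for every t ∈ [s,T) there exists L⁺ ∈ L^{q,r}_s with ‖δY_{s,u} − L⁺‖_{q,r,s} → 0 as u ↘ t, and for every t ∈ (s,T] there exists L⁻ ∈ L^{q,r}_s with ‖δY_{s,u} − L⁻‖_{q,r,s} → 0 as u ↗ t. -/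
open MeasureTheory Filter Set ENNReal

noncomputable section

/-- The conditional `L^{q,r}_s`-type norm `‖Y‖_{q,r,s} = ‖E_s[|Y|^q]‖_{L^r}^{1/q}`. -/
def condLqrs {Ω : Type*} {m0 : MeasurableSpace Ω} (μ : Measure Ω)
    (ℱ : MeasureTheory.Filtration ℝ m0) {E : Type*} [NormedAddCommGroup E]
    (q : ℝ) (r : ℝ≥0∞) (s : ℝ) (Y : Ω → E) : ℝ≥0∞ :=
  (eLpNorm (μ[(fun ω => ‖Y ω‖ ^ q) | ℱ s]) r μ) ^ (1 / q)

/-- Membership in the space `L^{q,r}_s` (with the measurability and integrability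
needed for the conditional expectation to be meaningful). -/
def MemLqrs {Ω : Type*} {m0 : MeasurableSpace Ω} (μ : Measure Ω)
    (ℱ : MeasureTheory.Filtration ℝ m0) {E : Type*} [NormedAddCommGroup E]
    (q : ℝ) (r : ℝ≥0∞) (s : ℝ) (Y : Ω → E) : Prop :=
  AEStronglyMeasurable Y μ ∧ Integrable (fun ω => ‖Y ω‖ ^ q) μ ∧
    condLqrs μ ℱ q r s Y < ⊤

/-- A partition `s = t_0 < t_1 < ⋯ < t_n = t` of the interval `[s,t]`. -/
structure IntervalPartition (s t : ℝ) where
  n : ℕ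
  pt : ℕ → ℝ
  h0 : pt 0 = s
  hn : pt n = t
  mono : ∀ i < n, pt i < pt (i + 1)

/-- The mesh size of a partition. -/
def IntervalPartition.mesh {s t : ℝ} (P : IntervalPartition s t) : ℝ :=
  ⨆ i : Fin P.n, (P.pt (i + 1) - P.pt i)

/-- The set of points of a partition. -/
def IntervalPartition.points {s t : ℝ} (P : IntervalPartition s t) : Set ℝ :=
  P.pt '' {i | i ≤ P.n}

/-- `p`-variation of a two-parameter (deterministic) function over `[s,t]`. -/
def pVar {E : Type*} [NormedAddCommGroup E] (p : ℝ) (F : ℝ → ℝ → E) (s t : ℝ) : ℝ≥0∞ :=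
  ⨆ P : IntervalPartition s t,
    (∑ i ∈ Finset.range P.n, (‖F (P.pt i) (P.pt (i + 1))‖₊ : ℝ≥0∞) ^ p) ^ (1 / p)

/-- `p`-variation of a path: `‖X‖_{p,[s,t]}`. -/
def pVarPath {E : Type*} [NormedAddCommGroup E] (p : ℝ) (X : ℝ → E) (s t : ℝ) : ℝ≥0∞ :=
  pVar p (fun u v => X v - X u) s t

/-- `‖F‖_{p,[s,t)}`, the `p`-variation over the half-open interval. -/
def pVarOpen {E : Type*} [NormedAddCommGroup E] (p : ℝ) (F : ℝ → ℝ → E) (s t : ℝ) : ℝ≥0∞ :=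
  ⨆ u ∈ Set.Ico s t, pVar p F s u

/-- `‖X‖_{p,[s,t)}` for a path. -/
def pVarPathOpen {E : Type*} [NormedAddCommGroup E] (p : ℝ) (X : ℝ → E) (s t : ℝ) : ℝ≥0∞ :=
  ⨆ u ∈ Set.Ico s t, pVarPath p X s u

/-- The mixed variation norm `‖Y‖_{p,q,r,[s,t]}` of a stochastic process. -/
def pqrVar {Ω : Type*} {m0 : MeasurableSpace Ω} (μ : Measure Ω)
    (ℱ : MeasureTheory.Filtration ℝ m0) {E : Type*} [NormedAddCommGroup E]
    (p q : ℝ) (r : ℝ≥0∞) (Y : ℝ → Ω → E) (s t : ℝ) : ℝ≥0∞ :=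
  ⨆ P : IntervalPartition s t,
    (∑ i ∈ Finset.range P.n,
      (condLqrs μ ℱ q r (P.pt i) (fun ω => Y (P.pt (i + 1)) ω - Y (P.pt i) ω)) ^ p) ^ (1 / p)

/-- `‖Y‖_{p,q,r,[s,t)}`. -/
def pqrVarOpen {Ω : Type*} {m0 : MeasurableSpace Ω} (μ : Measure Ω)
    (ℱ : MeasureTheory.Filtration ℝ m0) {E : Type*} [NormedAddCommGroup E]
    (p q : ℝ) (r : ℝ≥0∞) (Y : ℝ → Ω → E) (s t : ℝ) : ℝ≥0∞ :=
  ⨆ u ∈ Set.Ico s t, pqrVar μ ℱ p q r Y s u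

/-- The variation norm `(sup_𝒫 Σ_{[u,v]∈𝒫} ‖E_u[R_{u,v}]‖_{L^ρ}^a)^{1/a}` of the
conditional expectations of a two-parameter process `R`; with `a = p/2` and
`ρ = qr` this is `‖E_• R‖_{p/2,qr,[s,t]}`. -/
def pCondVar {Ω : Type*} {m0 : MeasurableSpace Ω} (μ : Measure Ω)
    (ℱ : MeasureTheory.Filtration ℝ m0) {E : Type*} [NormedAddCommGroup E]
    [NormedSpace ℝ E] [CompleteSpace E]
    (a : ℝ) (ρ : ℝ≥0∞) (R : ℝ → ℝ → Ω → E) (s t : ℝ) : ℝ≥0∞ :=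
  ⨆ P : IntervalPartition s t,
    (∑ i ∈ Finset.range P.n,
      (eLpNorm (μ[R (P.pt i) (P.pt (i + 1)) | ℱ (P.pt i)]) ρ μ) ^ a) ^ (1 / a)

/-- `‖E_• R‖_{a,ρ,[s,t)}`. -/
def pCondVarOpen {Ω : Type*} {m0 : MeasurableSpace Ω} (μ : Measure Ω)
    (ℱ : MeasureTheory.Filtration ℝ m0) {E : Type*} [NormedAddCommGroup E]
    [NormedSpace ℝ E] [CompleteSpace E]
    (a : ℝ) (ρ : ℝ≥0∞) (R : ℝ → ℝ → Ω → E) (s t : ℝ) : ℝ≥0∞ :=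
  ⨆ u ∈ Set.Ico s t, pCondVar μ ℱ a ρ R s u

/-- A control function on the simplex `Δ_{[0,T]}`: nonnegative and superadditive. -/
def IsControl (T : ℝ) (w : ℝ → ℝ → ℝ) : Prop :=
  (∀ ⦃s t : ℝ⦄, 0 ≤ s → s ≤ t → t ≤ T → 0 ≤ w s t) ∧
  (∀ ⦃s u t : ℝ⦄, 0 ≤ s → s ≤ u → u ≤ t → t ≤ T → w s u + w u t ≤ w s t)

/-- Right-continuity of a control in its first argument: `w(s+,t) = w(s,t)`. -/
def RCFirst (T : ℝ) (w : ℝ → ℝ → ℝ) : Prop :=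
  ∀ ⦃s t : ℝ⦄, 0 ≤ s → s < t → t ≤ T →
    Filter.Tendsto (fun u => w u t) (nhdsWithin s (Set.Ioo s t)) (nhds (w s t))

/-- Right-continuity of a control in its second argument: `w(s,t+) = w(s,t)`. -/
def RCSecond (T : ℝ) (w : ℝ → ℝ → ℝ) : Prop :=
  ∀ ⦃s t : ℝ⦄, 0 ≤ s → s ≤ t → t < T →
    Filter.Tendsto (fun u => w s u) (nhdsWithin t (Set.Ioc t T)) (nhds (w s t))

/-- The left limit `w(s,t-)` of a control in its second argument (expressed as a
supremum, which agrees with the limit by monotonicity; it equals `0` when `s = t`). -/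
def ctrlLeft (w : ℝ → ℝ → ℝ) (s t : ℝ) : ℝ :=
  sSup (w s '' Set.Ico s t)

/-- Right-continuity in probability of a stochastic process on `[0,T]`. -/
def RCinProb {Ω : Type*} {m0 : MeasurableSpace Ω} (μ : Measure Ω) (T : ℝ)
    {E : Type*} [NormedAddCommGroup E] (Y : ℝ → Ω → E) : Prop :=
  ∀ s ∈ Set.Ico (0 : ℝ) T, ∀ ε : ℝ, 0 < ε →
    Filter.Tendsto (fun t => μ {ω | ε ≤ ‖Y t ω - Y s ω‖})
      (nhdsWithin s (Set.Ioc s T)) (nhds 0)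

/-- Membership in the space `V^p L^{q,r}`. -/
def MemVpLqr {Ω : Type*} {m0 : MeasurableSpace Ω} (μ : Measure Ω)
    (ℱ : MeasureTheory.Filtration ℝ m0) {E : Type*} [NormedAddCommGroup E]
    (T p q : ℝ) (r : ℝ≥0∞) (Y : ℝ → Ω → E) : Prop :=
  (∀ t ∈ Set.Icc (0 : ℝ) T, AEStronglyMeasurable (Y t) μ) ∧
  (∀ ⦃u v : ℝ⦄, 0 ≤ u → u ≤ v → v ≤ T →
    Integrable (fun ω => ‖Y v ω - Y u ω‖ ^ q) μ) ∧
  RCinProb μ T Y ∧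
  MemLp (Y 0) (ENNReal.ofReal q) μ ∧
  pqrVar μ ℱ p q r Y 0 T < ⊤

/-- A function `g` is càdlàg on the interval `[a,b]`. -/
def CadlagOn {E : Type*} [TopologicalSpace E] (g : ℝ → E) (a b : ℝ) : Prop :=
  (∀ t ∈ Set.Ico a b, Filter.Tendsto g (nhdsWithin t (Set.Ioc t b)) (nhds (g t))) ∧
  (∀ t ∈ Set.Ioc a b, ∃ L : E, Filter.Tendsto g (nhdsWithin t (Set.Ico a t)) (nhds L))

/-- Chen's relation for a rough-path pair `(X, 𝕏)`. -/
def ChenRelation (T : ℝ) {d : ℕ} (X : ℝ → Fin d → ℝ)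
    (XX : ℝ → ℝ → Fin d → Fin d → ℝ) : Prop :=
  ∀ ⦃s u t : ℝ⦄, 0 ≤ s → s ≤ u → u ≤ t → t ≤ T →
    XX s t = XX s u + XX u t + fun i j => (X u i - X s i) * (X t j - X u j)

/-- A càdlàg `p`-rough path over `[0,T]` with values in `ℝ^d`. -/
def IsCadlagRoughPath (T p : ℝ) {d : ℕ} (X : ℝ → Fin d → ℝ)
    (XX : ℝ → ℝ → Fin d → Fin d → ℝ) : Prop :=
  CadlagOn X 0 T ∧
  (∀ s ∈ Set.Ico (0 : ℝ) T, CadlagOn (XX s) s T) ∧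
  pVarPath p X 0 T < ⊤ ∧
  pVar (p / 2) XX 0 T < ⊤ ∧
  ChenRelation T X XX

/-- The remainder `R^Y_{u,v} = δY_{u,v} - Y'_u δX_{u,v}` of a controlled path. -/
def scpRemainder {Ω : Type*} {d : ℕ} {W : Type*} [NormedAddCommGroup W] [NormedSpace ℝ W]
    (X : ℝ → Fin d → ℝ) (Y : ℝ → Ω → W)
    (Y' : ℝ → Ω → ((Fin d → ℝ) →L[ℝ] W)) (u v : ℝ) (ω : Ω) : W :=
  (Y v ω - Y u ω) - (Y' u ω) (fun i => X v i - X u i)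

/-- A stochastic controlled path `(Y,Y') ∈ 𝒱^{p,q,r}_X`. -/
def IsSCP {Ω : Type*} {m0 : MeasurableSpace Ω} (μ : Measure Ω)
    (ℱ : MeasureTheory.Filtration ℝ m0) (T p q : ℝ) (r : ℝ≥0∞)
    {d : ℕ} {W : Type*} [NormedAddCommGroup W] [NormedSpace ℝ W] [CompleteSpace W]
    (X : ℝ → Fin d → ℝ) (Y : ℝ → Ω → W)
    (Y' : ℝ → Ω → ((Fin d → ℝ) →L[ℝ] W)) : Prop :=
  (∀ t ∈ Set.Icc (0 : ℝ) T,
    StronglyMeasurable[ℱ t] (Y t) ∧ StronglyMeasurable[ℱ t] (Y' t)) ∧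
  MemVpLqr μ ℱ T p q r Y ∧
  MemVpLqr μ ℱ T p q r Y' ∧
  (∃ K : ℝ, ∀ s ∈ Set.Icc (0 : ℝ) T,
    eLpNorm (Y' s) (ENNReal.ofReal q * r) μ ≤ ENNReal.ofReal K) ∧
  (∀ ⦃u v : ℝ⦄, 0 ≤ u → u ≤ v → v ≤ T →
    Integrable (scpRemainder X Y Y' u v) μ) ∧
  pCondVar μ ℱ (p / 2) (ENNReal.ofReal q * r) (scpRemainder X Y Y') 0 T < ⊤

/-- Contraction `A(𝔾)` of a second-order Gubinelli derivative with a `d×d` array. -/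
def contract2 {d : ℕ} {W : Type*} [NormedAddCommGroup W] [NormedSpace ℝ W]
    (A : (Fin d → ℝ) →L[ℝ] ((Fin d → ℝ) →L[ℝ] W)) (G : Fin d → Fin d → ℝ) : W :=
  ∑ i, ∑ j, G i j • (A (Pi.single i 1)) (Pi.single j 1)

/-- Outer (tensor) product of two vectors. -/
def outer {e e' : ℕ} (x : Fin e → ℝ) (y : Fin e' → ℝ) : Fin e → Fin e' → ℝ :=
  fun a b => x a * y b

/-- `(A ⊗ B)(G)` for Gubinelli derivatives `A, B` and a `d×d` array `G`. -/
def tensorApply {d e e' : ℕ} (A : (Fin d → ℝ) →L[ℝ] (Fin e → ℝ))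
    (B : (Fin d → ℝ) →L[ℝ] (Fin e' → ℝ)) (G : Fin d → Fin d → ℝ) :
    Fin e → Fin e' → ℝ :=
  fun a b => ∑ i, ∑ j, G i j * (A (Pi.single i 1) a) * (B (Pi.single j 1) b)

/-- Symmetrization of a `d×d` array. -/
def symPart {d : ℕ} (G : Fin d → Fin d → ℝ) : Fin d → Fin d → ℝ :=
  fun i j => (G i j + G j i) / 2

/-- Membership in `C^n_b`. -/
def MemCnb {E F : Type*} [NormedAddCommGroup E] [NormedSpace ℝ E]
    [NormedAddCommGroup F] [NormedSpace ℝ F] (n : ℕ) (f : E → F) : Prop :=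
  ContDiff ℝ (n - 1 : ℕ) f ∧
  (∀ k ∈ Finset.range n, ∃ K : ℝ, ∀ x, ‖iteratedFDeriv ℝ k f x‖ ≤ K) ∧
  ∃ K : ℝ, ∀ x y,
    ‖iteratedFDeriv ℝ (n - 1) f x - iteratedFDeriv ℝ (n - 1) f y‖ ≤ K * ‖x - y‖

/-- The `C^n_b` norm. -/
def CnbNorm {E F : Type*} [NormedAddCommGroup E] [NormedSpace ℝ E]
    [NormedAddCommGroup F] [NormedSpace ℝ F] (n : ℕ) (f : E → F) : ℝ :=
  (∑ k ∈ Finset.range n, ⨆ x : E, ‖iteratedFDeriv ℝ k f x‖) +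
    ⨆ x : E, ⨆ y : E,
      ‖iteratedFDeriv ℝ (n - 1) f x - iteratedFDeriv ℝ (n - 1) f y‖ / ‖x - y‖

/-! A partition of `[0,u]` followed by `[u,v]` is a partition of `[0,v]`, so
`φ(v) := ‖Y‖_{p,q,r,[0,v]}^p` satisfies `φ(u) + ‖δY_{u,v}‖_{q,r,u}^p ≤ φ(v)`. Being monotone and
bounded by `‖Y‖_{p,q,r,[0,T]}^p`, `φ` has one-sided limits, hence `‖δY_{u,v}‖_{q,r,u} → 0` as
`u ≤ v` approach `t` from one side. As `‖·‖_{q,r,s} ≤ ‖·‖_{q,r,u}` for `s ≤ u` (tower property and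
`L^r`-contractivity of `E_s`), `u ↦ δY_{s,u}` is Cauchy in `L^{q,r}_s`. Since `‖·‖_{q,r,s}`
dominates the `L^q` norm, it converges in `L^q`, and the `L^q` limit is an `L^{q,r}_s` limit
because `‖·‖_{q,r,s}` is lower semicontinuous along `L^q`-convergent sequences: by Vitali,
`|W_n|^q → |W|^q` in `L^1`, so `E_s|W_n|^q → E_s|W|^q` in measure. -/

open Topology

section LpFacts

variable {Ω E : Type*} {m0 : MeasurableSpace Ω} {μ : Measure Ω} [NormedAddCommGroup E]

lemma memLp_ofReal_iff_integrable_norm_rpow {q : ℝ} (hq : 0 < q) {Z : Ω → E}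
    (hZ : AEStronglyMeasurable Z μ) :
    MemLp Z (ENNReal.ofReal q) μ ↔ Integrable (fun ω => ‖Z ω‖ ^ q) μ := by
  rw [← integrable_norm_rpow_iff hZ (by simpa using hq) ofReal_ne_top, toReal_ofReal hq.le]

theorem MeasureTheory.UnifIntegrable.norm_rpow {ι : Type*} {f : ι → Ω → E} {q : ℝ} (hq : 0 < q)
    (hf : UnifIntegrable f (ENNReal.ofReal q) μ) :
    UnifIntegrable (fun i ω => ‖f i ω‖ ^ q) 1 μ := by
  intro ε hε
  obtain ⟨δ, hδ, hfδ⟩ := hf (Real.rpow_pos_of_pos hε (1 / q))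
  refine ⟨δ, hδ, fun i S hS hμS => ?_⟩
  have hind : S.indicator (fun ω => ‖f i ω‖ ^ q) = fun ω => ‖S.indicator (f i) ω‖ ^ q := by
    ext ω
    by_cases hω : ω ∈ S <;> simp [hω, Real.zero_rpow hq.ne']
  rw [hind, eLpNorm_norm_rpow _ hq, one_mul]
  calc eLpNorm (S.indicator (f i)) (ENNReal.ofReal q) μ ^ q
      ≤ ENNReal.ofReal (ε ^ (1 / q)) ^ q := ENNReal.rpow_le_rpow (hfδ i S hS hμS) hq.le
    _ = ENNReal.ofReal ε := by
      rw [ENNReal.ofReal_rpow_of_nonneg (by positivity) hq.le, ← Real.rpow_mul hε.le,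
        one_div_mul_cancel hq.ne', Real.rpow_one]

theorem tendsto_eLpNorm_norm_rpow_sub [IsFiniteMeasure μ] {q : ℝ} (hq : 1 ≤ q)
    {f : ℕ → Ω → E} {g : Ω → E} (hf : ∀ n, MemLp (f n) (ENNReal.ofReal q) μ)
    (hg : MemLp g (ENNReal.ofReal q) μ)
    (hfg : Tendsto (fun n => eLpNorm (f n - g) (ENNReal.ofReal q) μ) atTop (𝓝 0)) :
    Tendsto (fun n => eLpNorm ((fun ω => ‖f n ω‖ ^ q) - fun ω => ‖g ω‖ ^ q) 1 μ) atTop (𝓝 0) := by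
  have hq0 : 0 < q := zero_lt_one.trans_le hq
  have hint : ∀ {Z : Ω → E}, MemLp Z (ENNReal.ofReal q) μ → Integrable (fun ω => ‖Z ω‖ ^ q) μ :=
    fun hZ => (memLp_ofReal_iff_integrable_norm_rpow hq0 hZ.1).1 hZ
  refine tendsto_of_subseq_tendsto fun ns hns => ?_
  obtain ⟨ms, hms, hae⟩ := (tendstoInMeasure_of_tendsto_eLpNorm (by simpa using hq0)
    (fun n => (hf (ns n)).1) hg.1 (hfg.comp hns)).exists_seq_tendsto_ae
  have hui := unifIntegrable_of_tendsto_Lp (by simpa using hq) ofReal_ne_top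
    (fun n => hf (ns (ms n))) hg (hfg.comp (hns.comp hms.tendsto_atTop))
  exact ⟨ms, tendsto_Lp_finite_of_tendsto_ae le_rfl one_ne_top
    (fun n => (hint (hf _)).aestronglyMeasurable) (memLp_one_iff_integrable.2 (hint hg))
    (hui.norm_rpow hq0) (hae.mono fun ω h => h.norm.rpow_const (Or.inr hq0.le))⟩

theorem exists_memLp_tendsto_eLpNorm_of_cauchy [CompleteSpace E] {p : ℝ≥0∞} (hp : 1 ≤ p)
    {ι : Type*} {l : Filter ι} [l.NeBot] {F : ι → Ω → E} (hF : ∀ᶠ i in l, MemLp (F i) p μ)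
    (hcauchy : Tendsto (fun ij : ι × ι => eLpNorm (F ij.1 - F ij.2) p μ) (l ×ˢ l) (𝓝 0)) :
    ∃ L, MemLp L p μ ∧ Tendsto (fun i => eLpNorm (F i - L) p μ) l (𝓝 0) := by
  classical
  have : Fact (1 ≤ p) := ⟨hp⟩
  let G : ι → Lp E p μ := fun i => if h : MemLp (F i) p μ then h.toLp (F i) else 0
  have hG : ∀ᶠ i in l, G i =ᵐ[μ] F i :=
    hF.mono fun i h => by simpa only [G, dif_pos h] using h.coeFn_toLp
  have hGcauchy : Cauchy (l.map G) := by
    refine cauchy_map_iff.2 ⟨inferInstance, uniformity_basis_edist.tendsto_right_iff.2 ?_⟩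
    intro ε hε
    filter_upwards [hcauchy.eventually_lt_const hε, hG.prod_mk hG]
      with ij hij ⟨hi, hj⟩
    rwa [Lp.edist_def, eLpNorm_congr_ae (hi.sub hj)]
  obtain ⟨L, hL⟩ := CompleteSpace.complete hGcauchy
  refine ⟨L, Lp.memLp L, ((Lp.tendsto_Lp_iff_tendsto_eLpNorm' G L).1 hL).congr' ?_⟩
  filter_upwards [hG] with i hi
  exact eLpNorm_congr_ae (hi.sub .rfl)

lemma eLpNorm_one_le_eLpNorm_one_condExp [IsFiniteMeasure μ] {m : MeasurableSpace Ω}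
    (hm : m ≤ m0) {f : Ω → ℝ} (hf : Integrable f μ) (hf0 : 0 ≤ f) :
    eLpNorm f 1 μ ≤ eLpNorm (μ[f | m]) 1 μ := by
  rw [eLpNorm_one_eq_lintegral_enorm, eLpNorm_one_eq_lintegral_enorm,
    ← ofReal_integral_norm_eq_lintegral_enorm hf,
    ← ofReal_integral_norm_eq_lintegral_enorm integrable_condExp]
  refine ENNReal.ofReal_le_ofReal ?_
  calc ∫ ω, ‖f ω‖ ∂μ = ∫ ω, (μ[f | m]) ω ∂μ := by
        rw [integral_condExp hm]
        exact integral_congr_ae (.of_forall fun ω => Real.norm_of_nonneg (hf0 ω))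
    _ ≤ ∫ ω, ‖(μ[f | m]) ω‖ ∂μ :=
        integral_mono integrable_condExp integrable_condExp.norm fun ω => Real.le_norm_self _

end LpFacts

section CondNorm

variable {Ω E : Type*} {m0 : MeasurableSpace Ω} {μ : Measure Ω} [NormedAddCommGroup E]
  (ℱ : Filtration ℝ m0) {q : ℝ} {r : ℝ≥0∞} {s : ℝ}

lemma condLqrs_sub_comm (A B : Ω → E) :
    condLqrs μ ℱ q r s (fun ω => A ω - B ω) = condLqrs μ ℱ q r s (fun ω => B ω - A ω) := by
  simp_rw [condLqrs, norm_sub_rev (A _)]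

lemma condLqrs_sub_self (hq : 0 < q) (Z : Ω → E) :
    condLqrs μ ℱ q r s (fun ω => Z ω - Z ω) = 0 := by
  simp [condLqrs, Real.zero_rpow hq.ne', hq]

lemma condLqrs_mono_base [IsFiniteMeasure μ] (hq : 0 ≤ q) (hr : 1 ≤ r) {u : ℝ} (hsu : s ≤ u)
    (Z : Ω → E) : condLqrs μ ℱ q r s Z ≤ condLqrs μ ℱ q r u Z := by
  unfold condLqrs
  gcongr
  calc eLpNorm (μ[fun ω => ‖Z ω‖ ^ q | ℱ s]) r μ
      = eLpNorm (μ[μ[fun ω => ‖Z ω‖ ^ q | ℱ u] | ℱ s]) r μ :=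
        eLpNorm_congr_ae (condExp_condExp_of_le (ℱ.mono hsu) (ℱ.le u)).symm
    _ ≤ _ := eLpNorm_condExp_le_eLpNorm _ hr

lemma eLpNorm_le_condLqrs [IsProbabilityMeasure μ] (hq : 0 < q) (hr : 1 ≤ r) {Z : Ω → E}
    (hZ : MemLp Z (ENNReal.ofReal q) μ) :
    eLpNorm Z (ENNReal.ofReal q) μ ≤ condLqrs μ ℱ q r s Z := by
  have hnorm := eLpNorm_norm_rpow (p := 1) (μ := μ) Z hq
  rw [one_mul] at hnorm
  rw [condLqrs, one_div, ENNReal.le_rpow_inv_iff hq, ← hnorm]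
  calc eLpNorm (fun ω => ‖Z ω‖ ^ q) 1 μ ≤ eLpNorm (μ[fun ω => ‖Z ω‖ ^ q | ℱ s]) 1 μ :=
        eLpNorm_one_le_eLpNorm_one_condExp (ℱ.le s)
          ((memLp_ofReal_iff_integrable_norm_rpow hq hZ.1).1 hZ) fun ω => by positivity
    _ ≤ _ := eLpNorm_le_eLpNorm_of_exponent_le hr integrable_condExp.aestronglyMeasurable

theorem condLqrs_le_of_tendsto_eLpNorm [IsFiniteMeasure μ] (hq : 1 ≤ q) {ι : Type*}
    {l : Filter ι} [l.NeBot] [l.IsCountablyGenerated] {W : ι → Ω → E} {W₀ : Ω → E}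
    (hW : ∀ᶠ i in l, MemLp (W i) (ENNReal.ofReal q) μ) (hW₀ : MemLp W₀ (ENNReal.ofReal q) μ)
    (hconv : Tendsto (fun i => eLpNorm (W i - W₀) (ENNReal.ofReal q) μ) l (𝓝 0))
    {ε : ℝ≥0∞} (hbd : ∀ᶠ i in l, condLqrs μ ℱ q r s (W i) ≤ ε) :
    condLqrs μ ℱ q r s W₀ ≤ ε := by
  have hq0 : 0 < q := zero_lt_one.trans_le hq
  have hint : ∀ {Z : Ω → E}, MemLp Z (ENNReal.ofReal q) μ → Integrable (fun ω => ‖Z ω‖ ^ q) μ :=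
    fun hZ => (memLp_ofReal_iff_integrable_norm_rpow hq0 hZ.1).1 hZ
  obtain ⟨x, hx, hgood⟩ := exists_seq_forall_of_frequently (hW.and hbd).frequently
  have hL1 := tendsto_eLpNorm_norm_rpow_sub hq (fun n => (hgood n).1) hW₀ (hconv.comp hx)
  have hcond : Tendsto (fun n => eLpNorm (μ[fun ω => ‖W (x n) ω‖ ^ q | ℱ s]
      - μ[fun ω => ‖W₀ ω‖ ^ q | ℱ s]) 1 μ) atTop (𝓝 0) := by
    refine tendsto_of_tendsto_of_tendsto_of_le_of_le tendsto_const_nhds hL1 (fun _ => zero_le)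
      fun n => ?_
    rw [← eLpNorm_congr_ae (condExp_sub (hint (hgood n).1) (hint hW₀) _)]
    exact eLpNorm_condExp_le_eLpNorm _ le_rfl
  have hbdx : ∀ n, eLpNorm (μ[fun ω => ‖W (x n) ω‖ ^ q | ℱ s]) r μ ≤ ε ^ q := fun n => by
    simpa only [condLqrs, one_div, ENNReal.rpow_inv_le_iff hq0] using (hgood n).2
  rw [condLqrs, one_div, ENNReal.rpow_inv_le_iff hq0]
  exact eLpNorm_le_of_tendstoInMeasure (.of_forall hbdx)
    (tendstoInMeasure_of_tendsto_eLpNorm one_ne_zero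
      (fun n => integrable_condExp.aestronglyMeasurable) integrable_condExp.aestronglyMeasurable hcond)
    fun n => integrable_condExp.aestronglyMeasurable

theorem exists_memLqrs_tendsto_of_cauchy [IsProbabilityMeasure μ] [CompleteSpace E] (hq : 1 ≤ q)
    (hr : 1 ≤ r) {ι : Type*} {l : Filter ι} [l.NeBot] [l.IsCountablyGenerated] {F : ι → Ω → E}
    (hF : ∀ᶠ i in l, MemLp (F i) (ENNReal.ofReal q) μ) {C : ℝ≥0∞} (hC : C ≠ ⊤)
    (hbdd : ∀ᶠ i in l, condLqrs μ ℱ q r s (F i) ≤ C)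
    (hcauchy : Tendsto (fun ij : ι × ι => condLqrs μ ℱ q r s (fun ω => F ij.1 ω - F ij.2 ω))
      (l ×ˢ l) (𝓝 0)) :
    ∃ L, MemLqrs μ ℱ q r s L ∧
      Tendsto (fun i => condLqrs μ ℱ q r s (fun ω => F i ω - L ω)) l (𝓝 0) := by
  have hq0 : 0 < q := zero_lt_one.trans_le hq
  obtain ⟨L, hL, hFL⟩ := exists_memLp_tendsto_eLpNorm_of_cauchy (by simpa using hq) hF <| by
    refine tendsto_of_tendsto_of_tendsto_of_le_of_le' tendsto_const_nhds hcauchy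
      (.of_forall fun _ => zero_le) ?_
    filter_upwards [hF.prod_mk hF] with ij ⟨hi, hj⟩
    exact eLpNorm_le_condLqrs ℱ hq0 hr (hi.sub hj)
  refine ⟨L, ⟨hL.1, (memLp_ofReal_iff_integrable_norm_rpow hq0 hL.1).1 hL,
    (condLqrs_le_of_tendsto_eLpNorm ℱ hq hF hL hFL hbdd).trans_lt hC.lt_top⟩, ?_⟩
  refine ENNReal.tendsto_nhds_zero.2 fun ε hε => ?_
  filter_upwards [(ENNReal.tendsto_nhds_zero.1 hcauchy ε hε).curry, hF] with i hi hFi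
  refine condLqrs_le_of_tendsto_eLpNorm ℱ hq (hF.mono fun j hj => hFi.sub hj) (hFi.sub hL) ?_ hi
  refine hFL.congr fun j => ?_
  rw [← eLpNorm_neg]
  congr 1
  abel

end CondNorm

namespace IntervalPartition

lemma nonempty {a b : ℝ} (hab : a ≤ b) : Nonempty (IntervalPartition a b) := by
  rcases hab.eq_or_lt with rfl | hlt
  · exact ⟨⟨0, fun _ => a, rfl, rfl, by simp⟩⟩
  · refine ⟨⟨1, fun i => if i = 0 then a else b, rfl, rfl, fun i hi => ?_⟩⟩
    obtain rfl := Nat.lt_one_iff.1 hi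
    simpa using hlt

def snoc {a b : ℝ} (P : IntervalPartition a b) (c : ℝ) (hbc : b < c) : IntervalPartition a c where
  n := P.n + 1
  pt i := if i ≤ P.n then P.pt i else c
  h0 := by simp [P.h0]
  hn := by simp
  mono i hi := by
    rcases (Nat.lt_succ_iff.1 hi).lt_or_eq with hlt | rfl
    · simpa [hlt.le, Nat.succ_le_of_lt hlt] using P.mono i hlt
    · simpa [P.hn] using hbc

lemma sum_snoc {a b : ℝ} (P : IntervalPartition a b) (c : ℝ) (hbc : b < c)
    (g : ℝ → ℝ → ℝ≥0∞) :
    ∑ i ∈ Finset.range (P.snoc c hbc).n, g ((P.snoc c hbc).pt i) ((P.snoc c hbc).pt (i + 1))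
      = ∑ i ∈ Finset.range P.n, g (P.pt i) (P.pt (i + 1)) + g b c := by
  simp only [snoc, Finset.sum_range_succ, le_refl, if_true, Nat.not_succ_le_self, if_false, P.hn]
  congr 1
  refine Finset.sum_congr rfl fun i hi => ?_
  have hi : i < P.n := Finset.mem_range.1 hi
  simp [hi.le, Nat.succ_le_of_lt hi]

end IntervalPartition

section Control

variable {Ω E : Type*} {m0 : MeasurableSpace Ω} (μ : Measure Ω) [NormedAddCommGroup E]
  (ℱ : Filtration ℝ m0) {p q : ℝ} {r : ℝ≥0∞} {Y : ℝ → Ω → E}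

/-- `‖Y‖_{p,q,r,[a,b]}^p`. -/
def pqrVarRpow (p q : ℝ) (r : ℝ≥0∞) (Y : ℝ → Ω → E) (a b : ℝ) : ℝ≥0∞ :=
  ⨆ P : IntervalPartition a b, ∑ i ∈ Finset.range P.n,
    condLqrs μ ℱ q r (P.pt i) (fun ω => Y (P.pt (i + 1)) ω - Y (P.pt i) ω) ^ p

variable {μ ℱ}

lemma pqrVarRpow_le_pqrVar_rpow (hp : 0 < p) (a b : ℝ) :
    pqrVarRpow μ ℱ p q r Y a b ≤ pqrVar μ ℱ p q r Y a b ^ p := by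
  refine iSup_le fun P => ?_
  rw [← ENNReal.rpow_inv_rpow hp.ne' (∑ i ∈ _, _), ← one_div]
  exact ENNReal.rpow_le_rpow (le_iSup_of_le P le_rfl) hp.le

lemma pqrVarRpow_add_le (hp : 0 < p) (hq : 0 < q) {a u v : ℝ} (hau : a ≤ u) (huv : u ≤ v) :
    pqrVarRpow μ ℱ p q r Y a u + condLqrs μ ℱ q r u (fun ω => Y v ω - Y u ω) ^ p
      ≤ pqrVarRpow μ ℱ p q r Y a v := by
  rcases huv.eq_or_lt with rfl | huv
  · rw [condLqrs_sub_self ℱ hq, ENNReal.zero_rpow_of_pos hp, add_zero]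
  have := IntervalPartition.nonempty hau
  rw [pqrVarRpow, ENNReal.iSup_add]
  refine iSup_le fun P => le_iSup_of_le (P.snoc v huv) ?_
  rw [IntervalPartition.sum_snoc P v huv
    (fun x y => condLqrs μ ℱ q r x (fun ω => Y y ω - Y x ω) ^ p)]

lemma monotoneOn_pqrVarRpow (hp : 0 < p) (hq : 0 < q) (a : ℝ) :
    MonotoneOn (pqrVarRpow μ ℱ p q r Y a) (Ici a) :=
  fun _ hu _ _ huv => le_self_add.trans (pqrVarRpow_add_le hp hq hu huv)

lemma condLqrs_rpow_le_pqrVarRpow_sub [IsFiniteMeasure μ] (hp : 0 < p) (hq : 0 < q) (hr : 1 ≤ r)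
    {a s u v : ℝ} (has : a ≤ s) (hsu : s ≤ u) (huv : u ≤ v)
    (hu : pqrVarRpow μ ℱ p q r Y a u ≠ ⊤) :
    condLqrs μ ℱ q r s (fun ω => Y v ω - Y u ω) ^ p
      ≤ pqrVarRpow μ ℱ p q r Y a v - pqrVarRpow μ ℱ p q r Y a u :=
  (ENNReal.rpow_le_rpow (condLqrs_mono_base ℱ hq.le hr hsu _) hp.le).trans
    (ENNReal.le_sub_of_add_le_left hu (pqrVarRpow_add_le hp hq (has.trans hsu) huv))

end Control

section Regulated

variable {Ω E : Type*} {m0 : MeasurableSpace Ω} {μ : Measure Ω} [IsProbabilityMeasure μ]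
  [NormedAddCommGroup E] {ℱ : Filtration ℝ m0} {p q : ℝ} {r : ℝ≥0∞} {Y : ℝ → Ω → E}

theorem tendsto_condLqrs_increment_sub (hp : 0 < p) (hq : 0 < q) (hr : 1 ≤ r) {a s : ℝ}
    (has : a ≤ s) {l : Filter ℝ} (hl : ∀ᶠ u in l, s ≤ u) {c : ℝ≥0∞} (hc : c ≠ ⊤)
    (hφ : Tendsto (pqrVarRpow μ ℱ p q r Y a) l (𝓝 c)) :
    Tendsto (fun uv : ℝ × ℝ =>
      condLqrs μ ℱ q r s (fun ω => (Y uv.1 ω - Y s ω) - (Y uv.2 ω - Y s ω))) (l ×ˢ l) (𝓝 0) := by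
  set φ := pqrVarRpow μ ℱ p q r Y a
  -- `(φ v - φ u) + (φ u - φ v)` plays the role of `|φ v - φ u|` under truncated subtraction.
  have hD : Tendsto (fun uv : ℝ × ℝ => (φ uv.2 - φ uv.1) + (φ uv.1 - φ uv.2)) (l ×ˢ l) (𝓝 0) := by
    simpa using (ENNReal.Tendsto.sub (hφ.comp tendsto_snd) (hφ.comp tendsto_fst) (.inl hc)).add
      (ENNReal.Tendsto.sub (hφ.comp tendsto_fst) (hφ.comp tendsto_snd) (.inl hc))
  have hl' : ∀ᶠ u in l, s ≤ u ∧ φ u ≠ ⊤ :=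
    hl.and ((hφ.eventually_lt_const hc.lt_top).mono fun _ => ne_of_lt)
  refine ENNReal.tendsto_nhds_zero.2 fun ε hε => ?_
  filter_upwards [ENNReal.tendsto_nhds_zero.1 hD _ (ENNReal.rpow_pos_of_nonneg hε hp.le),
    hl'.prod_mk hl'] with ⟨u, v⟩ hDuv ⟨⟨hu, hφu⟩, hv, hφv⟩
  simp only [sub_sub_sub_cancel_right]
  rw [← ENNReal.rpow_le_rpow_iff hp]
  refine le_trans ?_ hDuv
  rcases le_total u v with huv | hvu
  · rw [condLqrs_sub_comm]
    exact (condLqrs_rpow_le_pqrVarRpow_sub hp hq hr has hu huv hφu).trans le_self_add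
  · exact (condLqrs_rpow_le_pqrVarRpow_sub hp hq hr has hv hvu hφv).trans le_add_self

theorem exists_memLqrs_tendsto_increment [CompleteSpace E] (hp : 0 < p) (hq : 1 ≤ q) (hr : 1 ≤ r)
    {T : ℝ} (hmeas : ∀ t ∈ Icc (0 : ℝ) T, AEStronglyMeasurable (Y t) μ)
    (hint : ∀ ⦃u v : ℝ⦄, 0 ≤ u → u ≤ v → v ≤ T → Integrable (fun ω => ‖Y v ω - Y u ω‖ ^ q) μ)
    (hfin : pqrVar μ ℱ p q r Y 0 T ≠ ⊤) {s : ℝ} (hs : 0 ≤ s) {l : Filter ℝ} [l.NeBot]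
    [l.IsCountablyGenerated] (hl : ∀ᶠ u in l, u ∈ Ioc s T) {c : ℝ≥0∞}
    (hφ : Tendsto (pqrVarRpow μ ℱ p q r Y 0) l (𝓝 c)) :
    ∃ L, MemLqrs μ ℱ q r s L ∧
      Tendsto (fun u => condLqrs μ ℱ q r s (fun ω => (Y u ω - Y s ω) - L ω)) l (𝓝 0) := by
  have hq0 : 0 < q := zero_lt_one.trans_le hq
  have hφT : pqrVarRpow μ ℱ p q r Y 0 T < ⊤ := (pqrVarRpow_le_pqrVar_rpow hp 0 T).trans_lt
    (ENNReal.rpow_lt_top_of_nonneg hp.le hfin)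
  have hφle : ∀ u ∈ Icc s T, pqrVarRpow μ ℱ p q r Y 0 u ≤ pqrVarRpow μ ℱ p q r Y 0 T :=
    fun u hu => monotoneOn_pqrVarRpow hp hq0 0 (hs.trans hu.1) (hs.trans (hu.1.trans hu.2)) hu.2
  have hc : c ≠ ⊤ :=
    ((le_of_tendsto hφ (hl.mono fun u hu => hφle u (Ioc_subset_Icc_self hu))).trans_lt hφT).ne
  refine exists_memLqrs_tendsto_of_cauchy ℱ hq hr (F := fun u ω => Y u ω - Y s ω) ?_ hfin ?_
    (tendsto_condLqrs_increment_sub hp hq0 hr hs (hl.mono fun u hu => hu.1.le) hc hφ)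
  · filter_upwards [hl] with u hu
    have hsT : s ≤ T := hu.1.le.trans hu.2
    exact (memLp_ofReal_iff_integrable_norm_rpow hq0 ((hmeas u ⟨hs.trans hu.1.le, hu.2⟩).sub
      (hmeas s ⟨hs, hsT⟩))).2 (hint hs hu.1.le hu.2)
  · filter_upwards [hl] with u hu
    have hsT : s ≤ T := hu.1.le.trans hu.2
    rw [← ENNReal.rpow_le_rpow_iff hp]
    calc condLqrs μ ℱ q r s (fun ω => Y u ω - Y s ω) ^ p
        ≤ pqrVarRpow μ ℱ p q r Y 0 u - pqrVarRpow μ ℱ p q r Y 0 s :=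
          condLqrs_rpow_le_pqrVarRpow_sub hp hq0 hr hs le_rfl hu.1.le
            (hφle s ⟨le_rfl, hsT⟩ |>.trans_lt hφT).ne
      _ ≤ pqrVarRpow μ ℱ p q r Y 0 T := tsub_le_self.trans (hφle u (Ioc_subset_Icc_self hu))
      _ ≤ pqrVar μ ℱ p q r Y 0 T ^ p := pqrVarRpow_le_pqrVar_rpow hp 0 T

end Regulated

theorem statement5_general
    {Ω : Type*} {m0 : MeasurableSpace Ω} (μ : Measure Ω) [IsProbabilityMeasure μ]
    (ℱ : MeasureTheory.Filtration ℝ m0) (T : ℝ)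
    {E : Type*} [NormedAddCommGroup E] [CompleteSpace E]
    (p q : ℝ) (hp : 1 ≤ p) (hq : 1 ≤ q) (r : ℝ≥0∞) (hr : 1 ≤ r)
    (Y : ℝ → Ω → E)
    (hmeas : ∀ t ∈ Set.Icc (0 : ℝ) T, AEStronglyMeasurable (Y t) μ)
    (hint : ∀ ⦃u v : ℝ⦄, 0 ≤ u → u ≤ v → v ≤ T →
      Integrable (fun ω => ‖Y v ω - Y u ω‖ ^ q) μ)
    (hfin : pqrVar μ ℱ p q r Y 0 T < ⊤) :
    ∀ s ∈ Set.Ico (0 : ℝ) T,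
      -- right limits in L^{q,r}_s
      (∀ t ∈ Set.Ico s T, ∃ L : Ω → E, MemLqrs μ ℱ q r s L ∧
        Filter.Tendsto
          (fun u => condLqrs μ ℱ q r s (fun ω => (Y u ω - Y s ω) - L ω))
          (nhdsWithin t (Set.Ioc t T)) (nhds 0)) ∧
      -- left limits in L^{q,r}_s
      (∀ t ∈ Set.Ioc s T, ∃ L : Ω → E, MemLqrs μ ℱ q r s L ∧
        Filter.Tendsto
          (fun u => condLqrs μ ℱ q r s (fun ω => (Y u ω - Y s ω) - L ω))
          (nhdsWithin t (Set.Ico s t)) (nhds 0)) := by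
  have hp0 : 0 < p := zero_lt_one.trans_le hp
  have hφ := monotoneOn_pqrVarRpow (μ := μ) (ℱ := ℱ) (r := r) (Y := Y) hp0 (zero_lt_one.trans_le hq) 0
  rintro s ⟨hs, -⟩
  refine ⟨fun t ⟨hst, htT⟩ => ?_, fun t ⟨hst, htT⟩ => ?_⟩
  · rw [nhdsWithin_Ioc_eq_nhdsGT htT]
    exact exists_memLqrs_tendsto_increment hp0 hq hr hmeas hint hfin.ne hs
      (mem_of_superset (Ioc_mem_nhdsGT htT) (Ioc_subset_Ioc_left hst))
      ((hφ.mono fun u hu => hs.trans (hst.trans hu.1.le)).tendsto_nhdsWithin_Ioo_right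
        (nonempty_Ioo.2 htT) (OrderBot.bddBelow _))
  · rw [nhdsWithin_Ico_eq_nhdsLT hst]
    exact exists_memLqrs_tendsto_increment hp0 hq hr hmeas hint hfin.ne hs
      (mem_of_superset (Ioo_mem_nhdsLT hst) fun u hu => ⟨hu.1, hu.2.le.trans htT⟩)
      ((hφ.mono fun u hu => hs.trans hu.1.le).tendsto_nhdsWithin_Ioo_left
        (nonempty_Ioo.2 hst) (OrderTop.bddAbove _))

/-- Lemma 2.6: a process with finite `‖·‖_{p,q,r,[0,T]}` norm is
`L^{q,r}_•`-regulated: the map `t ↦ δY_{s,t}` admits left and right limits in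
`L^{q,r}_s`. -/
theorem statement5
    {Ω : Type*} {m0 : MeasurableSpace Ω} (μ : Measure Ω) [IsProbabilityMeasure μ]
    (ℱ : MeasureTheory.Filtration ℝ m0) (T : ℝ) (hT : 0 < T)
    {E : Type*} [NormedAddCommGroup E] [NormedSpace ℝ E] [CompleteSpace E]
    (p q : ℝ) (hp : 1 ≤ p) (hq : 1 ≤ q) (r : ℝ≥0∞) (hr : 1 ≤ r)
    (Y : ℝ → Ω → E)
    (hmeas : ∀ t ∈ Set.Icc (0 : ℝ) T, AEStronglyMeasurable (Y t) μ)
    (hint : ∀ ⦃u v : ℝ⦄, 0 ≤ u → u ≤ v → v ≤ T →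
      Integrable (fun ω => ‖Y v ω - Y u ω‖ ^ q) μ)
    (hfin : pqrVar μ ℱ p q r Y 0 T < ⊤) :
    ∀ s ∈ Set.Ico (0 : ℝ) T,
      -- right limits in L^{q,r}_s
      (∀ t ∈ Set.Ico s T, ∃ L : Ω → E, MemLqrs μ ℱ q r s L ∧
        Filter.Tendsto
          (fun u => condLqrs μ ℱ q r s (fun ω => (Y u ω - Y s ω) - L ω))
          (nhdsWithin t (Set.Ioc t T)) (nhds 0)) ∧
      -- left limits in L^{q,r}_s
      (∀ t ∈ Set.Ioc s T, ∃ L : Ω → E, MemLqrs μ ℱ q r s L ∧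
        Filter.Tendsto
          (fun u => condLqrs μ ℱ q r s (fun ω => (Y u ω - Y s ω) - L ω))
          (nhdsWithin t (Set.Ico s t)) (nhds 0)) :=
  statement5_general μ ℱ T p q hp hq r hr Y hmeas hint hfin
end
end

section
/- Let p, q ∈ [1,∞) and ν > 0. If Y ∈ V^pL^q and (Y^n)_{n∈ℕ} is a sequence of processes with ‖Y^n‖_{p,q,∞,[0,T]} ≤ ν for every n and ‖Y^n − Y‖_{p,q,[0,T]} → 0 as n → ∞, then ‖Y‖_{p,q,∞,[0,T]} ≤ ν. In other words, the set 𝓑^{p,q,∞}(ν) := {Y ∈ V^pL^{q,∞} : ‖Y‖_{p,q,∞,[0,T]} ≤ ν} is a closed subset of V^pL^q. -/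
open MeasureTheory Filter Set ENNReal

noncomputable section

/-! The norm `‖Z‖_{q,∞,s}` has a dual description: `E_s[|Z|^q] ≤ M^q` a.s. if and only if
`E[|Z|^q ; F] ≤ M^q μ(F)` for every `F ∈ 𝓕_s`, i.e. `‖Z 1_F‖_{L^q} ≤ M μ(F)^{1/q}`. For fixed `F`,
`‖Z 1_F‖_{L^q}` is continuous in `Z ∈ L^q` by Minkowski's inequality, and `‖Z‖_{q,1,s} = ‖Z‖_{L^q}`,
so each increment norm `‖δY_{u,v}‖_{q,∞,u}` is lower semicontinuous along `Y^n → Y` in `V^pL^q`.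
Summing over a partition and exchanging finite sums with `liminf` gives
`‖Y‖_{p,q,∞} ≤ liminf ‖Y^n‖_{p,q,∞} ≤ ν`. -/

open scoped Topology

namespace MeasureTheory

variable {Ω : Type*} {m m0 : MeasurableSpace Ω} {μ : Measure Ω}

lemma setLIntegral_ofReal_condExp (hm : m ≤ m0) [SigmaFinite (μ.trim hm)] {g : Ω → ℝ}
    (hg : Integrable g μ) (hg0 : 0 ≤ᵐ[μ] g) {F : Set Ω} (hF : MeasurableSet[m] F) :
    ∫⁻ ω in F, ENNReal.ofReal (μ[g|m] ω) ∂μ = ∫⁻ ω in F, ENNReal.ofReal (g ω) ∂μ := by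
  rw [← ofReal_integral_eq_lintegral_ofReal integrable_condExp.integrableOn
      (ae_restrict_of_ae (condExp_nonneg hg0)),
    ← ofReal_integral_eq_lintegral_ofReal hg.integrableOn (ae_restrict_of_ae hg0),
    setIntegral_condExp hm hg hF]

lemma setLIntegral_ofReal_le_eLpNorm_condExp_top_mul (hm : m ≤ m0) [SigmaFinite (μ.trim hm)]
    {g : Ω → ℝ} (hg : Integrable g μ) (hg0 : 0 ≤ᵐ[μ] g) {F : Set Ω} (hF : MeasurableSet[m] F) :
    ∫⁻ ω in F, ENNReal.ofReal (g ω) ∂μ ≤ eLpNorm (μ[g|m]) ⊤ μ * μ F := by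
  rw [← setLIntegral_ofReal_condExp hm hg hg0 hF, ← setLIntegral_const]
  refine lintegral_mono_ae (ae_restrict_of_ae ?_)
  filter_upwards [ae_le_eLpNormEssSup (f := μ[g|m]) (μ := μ)] with ω hω
  rw [eLpNorm_exponent_top]
  exact (Real.ofReal_le_enorm _).trans hω

lemma eLpNorm_condExp_top_le_of_forall_setLIntegral_le (hm : m ≤ m0) [IsFiniteMeasure μ]
    {g : Ω → ℝ} (hg : Integrable g μ) (hg0 : 0 ≤ᵐ[μ] g) {M : ℝ≥0∞}
    (hM : ∀ F, MeasurableSet[m] F → ∫⁻ ω in F, ENNReal.ofReal (g ω) ∂μ ≤ M * μ F) :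
    eLpNorm (μ[g|m]) ⊤ μ ≤ M := by
  have hle : ∀ᵐ ω ∂μ.trim hm, ENNReal.ofReal (μ[g|m] ω) ≤ M := by
    refine ae_le_of_forall_setLIntegral_le_of_sigmaFinite
      stronglyMeasurable_condExp.measurable.ennreal_ofReal fun F hF _ => ?_
    rw [restrict_trim hm μ hF,
      lintegral_trim hm stronglyMeasurable_condExp.measurable.ennreal_ofReal,
      setLIntegral_ofReal_condExp hm hg hg0 hF, lintegral_const,
      trim_measurableSet_eq hm MeasurableSet.univ, Measure.restrict_apply_univ]
    exact hM F hF
  rw [eLpNorm_exponent_top]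
  refine eLpNormEssSup_le_of_ae_enorm_bound ?_
  filter_upwards [ae_of_ae_trim hm hle, condExp_nonneg (m := m) hg0] with ω hω hω0
  rwa [Real.enorm_eq_ofReal hω0]

variable {E : Type*} [NormedAddCommGroup E] {q : ℝ} {Z : Ω → E}

lemma eLpNorm_ofReal_rpow_eq_lintegral (hq : 0 < q) (Z : Ω → E) :
    eLpNorm Z (ENNReal.ofReal q) μ ^ q = ∫⁻ ω, ENNReal.ofReal (‖Z ω‖ ^ q) ∂μ := by
  rw [eLpNorm_eq_lintegral_rpow_enorm_toReal (by simpa using hq) ENNReal.ofReal_ne_top,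
    ENNReal.toReal_ofReal hq.le, ← ENNReal.rpow_mul, one_div_mul_cancel hq.ne', ENNReal.rpow_one]
  simp_rw [← ofReal_norm, ENNReal.ofReal_rpow_of_nonneg (norm_nonneg _) hq.le]

lemma MemLp.integrable_norm_rpow_ofReal (hZ : MemLp Z (ENNReal.ofReal q) μ) (hq : 0 < q) :
    Integrable (fun ω => ‖Z ω‖ ^ q) μ := by
  simpa [ENNReal.toReal_ofReal hq.le] using
    hZ.integrable_norm_rpow (by simpa using hq) ENNReal.ofReal_ne_top

end MeasureTheory

section CondNorm

variable {Ω : Type*} {m0 : MeasurableSpace Ω} {μ : Measure Ω} [IsFiniteMeasure μ]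
  {ℱ : Filtration ℝ m0} {E : Type*} [NormedAddCommGroup E] {q s : ℝ} {Z : Ω → E}

lemma eLpNorm_restrict_le_condLqrs_top_mul (hq : 0 < q) (hZ : MemLp Z (ENNReal.ofReal q) μ)
    {F : Set Ω} (hF : MeasurableSet[ℱ s] F) :
    eLpNorm Z (ENNReal.ofReal q) (μ.restrict F) ≤ condLqrs μ ℱ q ⊤ s Z * μ F ^ (1 / q) := by
  have key := setLIntegral_ofReal_le_eLpNorm_condExp_top_mul (ℱ.le s)
    (hZ.integrable_norm_rpow_ofReal hq) (ae_of_all _ fun ω => by positivity) hF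
  rw [← eLpNorm_ofReal_rpow_eq_lintegral hq] at key
  calc eLpNorm Z (ENNReal.ofReal q) (μ.restrict F)
      = (eLpNorm Z (ENNReal.ofReal q) (μ.restrict F) ^ q) ^ (1 / q) := by
        rw [← ENNReal.rpow_mul, mul_one_div_cancel hq.ne', ENNReal.rpow_one]
    _ ≤ _ := by
        rw [condLqrs, ← ENNReal.mul_rpow_of_nonneg _ _ (by positivity)]
        gcongr

lemma condLqrs_top_le_of_forall_eLpNorm_restrict_le (hq : 0 < q)
    (hZ : MemLp Z (ENNReal.ofReal q) μ) {M : ℝ≥0∞}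
    (hM : ∀ F, MeasurableSet[ℱ s] F →
      eLpNorm Z (ENNReal.ofReal q) (μ.restrict F) ≤ M * μ F ^ (1 / q)) :
    condLqrs μ ℱ q ⊤ s Z ≤ M := by
  have key : eLpNorm (μ[fun ω => ‖Z ω‖ ^ q | ℱ s]) ⊤ μ ≤ M ^ q := by
    refine eLpNorm_condExp_top_le_of_forall_setLIntegral_le (ℱ.le s)
      (hZ.integrable_norm_rpow_ofReal hq) (ae_of_all _ fun ω => by positivity) fun F hF => ?_
    rw [← eLpNorm_ofReal_rpow_eq_lintegral hq]
    calc _ ≤ (M * μ F ^ (1 / q)) ^ q := by gcongr; exact hM F hF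
      _ = M ^ q * μ F := by
        rw [ENNReal.mul_rpow_of_nonneg _ _ hq.le, ← ENNReal.rpow_mul, one_div_mul_cancel hq.ne',
          ENNReal.rpow_one]
  calc condLqrs μ ℱ q ⊤ s Z ≤ (M ^ q) ^ (1 / q) := by rw [condLqrs]; gcongr
    _ = M := by rw [← ENNReal.rpow_mul, mul_one_div_cancel hq.ne', ENNReal.rpow_one]

lemma condLqrs_one_eq_eLpNorm (hq : 0 < q) (hZ : MemLp Z (ENNReal.ofReal q) μ) :
    condLqrs μ ℱ q 1 s Z = eLpNorm Z (ENNReal.ofReal q) μ := by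
  have hint := hZ.integrable_norm_rpow_ofReal hq
  have hnonneg : 0 ≤ᵐ[μ] fun ω => ‖Z ω‖ ^ q := ae_of_all _ fun ω => by positivity
  have key : eLpNorm (μ[fun ω => ‖Z ω‖ ^ q | ℱ s]) 1 μ = eLpNorm Z (ENNReal.ofReal q) μ ^ q := by
    rw [eLpNorm_one_eq_lintegral_enorm, eLpNorm_ofReal_rpow_eq_lintegral hq]
    calc _ = ∫⁻ ω, ENNReal.ofReal (μ[fun ω => ‖Z ω‖ ^ q | ℱ s] ω) ∂μ :=
          lintegral_congr_ae <| (condExp_nonneg hnonneg).mono fun ω hω => Real.enorm_eq_ofReal hω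
      _ = _ := by
          simpa using setLIntegral_ofReal_condExp (ℱ.le s) hint hnonneg MeasurableSet.univ
  rw [condLqrs, key, ← ENNReal.rpow_mul, mul_one_div_cancel hq.ne', ENNReal.rpow_one]

end CondNorm

lemma ENNReal.liminf_add_liminf_le {α : Type*} (f : Filter α) (u v : α → ℝ≥0∞) :
    liminf u f + liminf v f ≤ liminf (fun n => u n + v n) f := by
  rw [liminf_eq, liminf_eq, ENNReal.sSup_add ⟨0, by simp⟩]
  refine iSup₂_le fun a ha => ?_
  rw [ENNReal.add_sSup ⟨0, by simp⟩]
  refine iSup₂_le fun b hb => le_liminf_of_le (by isBoundedDefault) ?_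
  filter_upwards [ha, hb] with n han hbn
  exact add_le_add han hbn

lemma ENNReal.sum_liminf_le_liminf_sum {α ι : Type*} (f : Filter α) (S : Finset ι)
    (u : ι → α → ℝ≥0∞) : ∑ i ∈ S, liminf (u i) f ≤ liminf (fun n => ∑ i ∈ S, u i n) f := by
  classical
  induction S using Finset.induction_on with
  | empty => simp
  | insert a S haS ih =>
    simp only [Finset.sum_insert haS]
    exact (add_le_add le_rfl ih).trans (ENNReal.liminf_add_liminf_le f _ _)

lemma ENNReal.liminf_rpow {α : Type*} (f : Filter α) [f.NeBot] {p : ℝ} (hp : 0 < p) (u : α → ℝ≥0∞) :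
    liminf u f ^ p = liminf (fun n => u n ^ p) f := by
  rw [(ENNReal.monotone_rpow_of_nonneg hp.le).map_liminf_of_continuousAt u
    ENNReal.continuous_rpow_const.continuousAt]
  rfl

lemma IntervalPartition.pt_mem_Icc {s t : ℝ} (P : IntervalPartition s t) {i : ℕ} (hi : i ≤ P.n) :
    P.pt i ∈ Icc s t := by
  have hmono : Monotone fun j => P.pt (min j P.n) := monotone_nat_of_le_succ fun j => by
    rcases lt_or_ge j P.n with h | h
    · rw [min_eq_left h.le, min_eq_left h]; exact (P.mono j h).le
    · rw [min_eq_right h, min_eq_right (by omega)]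
  constructor
  · simpa [P.h0, min_eq_left hi] using hmono (Nat.zero_le i)
  · simpa [P.hn, min_eq_left hi] using hmono hi

section Variation

variable {Ω : Type*} {m0 : MeasurableSpace Ω} {μ : Measure Ω} {ℱ : Filtration ℝ m0}
  {E : Type*} [NormedAddCommGroup E] {p q : ℝ} {r : ℝ≥0∞} {Y : ℝ → Ω → E} {s t : ℝ}

lemma sum_condLqrs_rpow_le_pqrVar_rpow (hp : 0 < p) (P : IntervalPartition s t) :
    ∑ i ∈ Finset.range P.n, condLqrs μ ℱ q r (P.pt i)
        (fun ω => Y (P.pt (i + 1)) ω - Y (P.pt i) ω) ^ p ≤ pqrVar μ ℱ p q r Y s t ^ p := by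
  calc _ = ((∑ i ∈ Finset.range P.n, condLqrs μ ℱ q r (P.pt i)
        (fun ω => Y (P.pt (i + 1)) ω - Y (P.pt i) ω) ^ p) ^ (1 / p)) ^ p := by
        rw [← ENNReal.rpow_mul, one_div_mul_cancel hp.ne', ENNReal.rpow_one]
    _ ≤ _ := by
        gcongr
        exact le_iSup (fun P : IntervalPartition s t => (∑ i ∈ Finset.range P.n,
          condLqrs μ ℱ q r (P.pt i) (fun ω => Y (P.pt (i + 1)) ω - Y (P.pt i) ω) ^ p) ^ (1 / p)) P

lemma condLqrs_le_pqrVar (hp : 0 < p) (P : IntervalPartition s t) {i : ℕ} (hi : i < P.n) :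
    condLqrs μ ℱ q r (P.pt i) (fun ω => Y (P.pt (i + 1)) ω - Y (P.pt i) ω) ≤
      pqrVar μ ℱ p q r Y s t := by
  refine (ENNReal.rpow_le_rpow_iff hp).1 ((Finset.single_le_sum (fun j _ => zero_le)
    (Finset.mem_range.2 hi)).trans (sum_condLqrs_rpow_le_pqrVar_rpow hp P))

lemma pqrVar_le_of_forall_sum_le (hp : 0 < p) {M : ℝ≥0∞}
    (hM : ∀ P : IntervalPartition s t, ∑ i ∈ Finset.range P.n, condLqrs μ ℱ q r (P.pt i)
        (fun ω => Y (P.pt (i + 1)) ω - Y (P.pt i) ω) ^ p ≤ M ^ p) :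
    pqrVar μ ℱ p q r Y s t ≤ M :=
  iSup_le fun P => by
    calc _ ≤ (M ^ p) ^ (1 / p) := by gcongr; exact hM P
      _ = M := by rw [← ENNReal.rpow_mul, mul_one_div_cancel hp.ne', ENNReal.rpow_one]

end Variation

lemma condLqrs_top_le_liminf {Ω : Type*} {m0 : MeasurableSpace Ω} {μ : Measure Ω}
    [IsFiniteMeasure μ] {ℱ : Filtration ℝ m0} {E : Type*} [NormedAddCommGroup E] {q s : ℝ}
    (hq : 1 ≤ q) {X : Ω → E} {Xn : ℕ → Ω → E} (hX : MemLp X (ENNReal.ofReal q) μ)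
    (hXn : ∀ n, MemLp (Xn n) (ENNReal.ofReal q) μ)
    (hlim : Tendsto (fun n => eLpNorm (Xn n - X) (ENNReal.ofReal q) μ) atTop (𝓝 0)) :
    condLqrs μ ℱ q ⊤ s X ≤ liminf (fun n => condLqrs μ ℱ q ⊤ s (Xn n)) atTop := by
  have hq0 : 0 < q := by linarith
  refine condLqrs_top_le_of_forall_eLpNorm_restrict_le hq0 hX fun F hF => ?_
  have hFfin : μ F ^ (1 / q) ≠ ⊤ :=
    ENNReal.rpow_ne_top_of_nonneg (by positivity) (measure_ne_top _ _)
  have hbound : ∀ n, eLpNorm X (ENNReal.ofReal q) (μ.restrict F) ≤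
      condLqrs μ ℱ q ⊤ s (Xn n) * μ F ^ (1 / q) + eLpNorm (Xn n - X) (ENNReal.ofReal q) μ := by
    intro n
    calc eLpNorm X (ENNReal.ofReal q) (μ.restrict F)
        = eLpNorm (Xn n - (Xn n - X)) (ENNReal.ofReal q) (μ.restrict F) := by
          rw [_root_.sub_sub_cancel]
      _ ≤ eLpNorm (Xn n) (ENNReal.ofReal q) (μ.restrict F) +
          eLpNorm (Xn n - X) (ENNReal.ofReal q) (μ.restrict F) :=
        eLpNorm_sub_le (hXn n).1.restrict ((hXn n).1.sub hX.1).restrict (by simpa using hq)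
      _ ≤ _ := add_le_add (eLpNorm_restrict_le_condLqrs_top_mul hq0 (hXn n) hF)
          (eLpNorm_mono_measure _ Measure.restrict_le_self)
  calc eLpNorm X (ENNReal.ofReal q) (μ.restrict F)
      ≤ liminf (fun n => condLqrs μ ℱ q ⊤ s (Xn n) * μ F ^ (1 / q) +
          eLpNorm (Xn n - X) (ENNReal.ofReal q) μ) atTop :=
        le_liminf_of_le (by isBoundedDefault) (Eventually.of_forall hbound)
    _ = liminf (fun n => condLqrs μ ℱ q ⊤ s (Xn n)) atTop * μ F ^ (1 / q) := by
        rw [← Pi.add_def, ENNReal.liminf_add_of_right_tendsto_zero hlim,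
          ENNReal.liminf_mul_const_of_ne_top hFfin, mul_comm]

lemma pqrVar_top_le_liminf {Ω : Type*} {m0 : MeasurableSpace Ω} {μ : Measure Ω}
    [IsFiniteMeasure μ] {ℱ : Filtration ℝ m0} {E : Type*} [NormedAddCommGroup E] {p q s t : ℝ}
    (hp : 0 < p) (hq : 1 ≤ q) {Y : ℝ → Ω → E} {Yn : ℕ → ℝ → Ω → E}
    (hY : ∀ u v, s ≤ u → u ≤ v → v ≤ t →
      MemLp (fun ω => Y v ω - Y u ω) (ENNReal.ofReal q) μ)
    (hYn : ∀ n u v, s ≤ u → u ≤ v → v ≤ t →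
      MemLp (fun ω => Yn n v ω - Yn n u ω) (ENNReal.ofReal q) μ)
    (hconv : Tendsto (fun n => pqrVar μ ℱ p q 1 (fun t ω => Yn n t ω - Y t ω) s t) atTop (𝓝 0)) :
    pqrVar μ ℱ p q ⊤ Y s t ≤ liminf (fun n => pqrVar μ ℱ p q ⊤ (Yn n) s t) atTop := by
  refine pqrVar_le_of_forall_sum_le hp fun P => ?_
  have hinc : ∀ i < P.n,
      condLqrs μ ℱ q ⊤ (P.pt i) (fun ω => Y (P.pt (i + 1)) ω - Y (P.pt i) ω) ≤
        liminf (fun n => condLqrs μ ℱ q ⊤ (P.pt i)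
          (fun ω => Yn n (P.pt (i + 1)) ω - Yn n (P.pt i) ω)) atTop := by
    intro i hi
    have hs := (P.pt_mem_Icc hi.le).1
    have ht := (P.pt_mem_Icc (Nat.succ_le_of_lt hi)).2
    have hYi := hY _ _ hs (P.mono i hi).le ht
    have hYni := fun n => hYn n _ _ hs (P.mono i hi).le ht
    refine condLqrs_top_le_liminf hq hYi hYni <|
      tendsto_of_tendsto_of_tendsto_of_le_of_le tendsto_const_nhds hconv (fun _ => zero_le)
        fun n => ?_
    have hsub : ((fun ω => Yn n (P.pt (i + 1)) ω - Yn n (P.pt i) ω) -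
          fun ω => Y (P.pt (i + 1)) ω - Y (P.pt i) ω) =
        fun ω => (Yn n (P.pt (i + 1)) ω - Y (P.pt (i + 1)) ω) -
          (Yn n (P.pt i) ω - Y (P.pt i) ω) := by
      funext ω
      simp only [Pi.sub_apply]
      abel
    rw [← condLqrs_one_eq_eLpNorm (ℱ := ℱ) (s := P.pt i) (by linarith) ((hYni n).sub hYi), hsub]
    exact condLqrs_le_pqrVar (Y := fun t ω => Yn n t ω - Y t ω) hp P hi
  calc ∑ i ∈ Finset.range P.n,
        condLqrs μ ℱ q ⊤ (P.pt i) (fun ω => Y (P.pt (i + 1)) ω - Y (P.pt i) ω) ^ p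
      ≤ ∑ i ∈ Finset.range P.n, liminf (fun n => condLqrs μ ℱ q ⊤ (P.pt i)
          (fun ω => Yn n (P.pt (i + 1)) ω - Yn n (P.pt i) ω) ^ p) atTop :=
        Finset.sum_le_sum fun i hi => by
          rw [← ENNReal.liminf_rpow _ hp]
          gcongr
          exact hinc i (Finset.mem_range.1 hi)
    _ ≤ liminf (fun n => ∑ i ∈ Finset.range P.n, condLqrs μ ℱ q ⊤ (P.pt i)
          (fun ω => Yn n (P.pt (i + 1)) ω - Yn n (P.pt i) ω) ^ p) atTop :=
        ENNReal.sum_liminf_le_liminf_sum _ _ _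
    _ ≤ liminf (fun n => pqrVar μ ℱ p q ⊤ (Yn n) s t ^ p) atTop :=
        liminf_le_liminf (Eventually.of_forall fun n => sum_condLqrs_rpow_le_pqrVar_rpow hp P)
    _ = _ := (ENNReal.liminf_rpow _ hp _).symm

lemma MemVpLqr.memLp_sub {Ω : Type*} {m0 : MeasurableSpace Ω} {μ : Measure Ω}
    {ℱ : Filtration ℝ m0} {E : Type*} [NormedAddCommGroup E] {T p q : ℝ} {r : ℝ≥0∞}
    {Y : ℝ → Ω → E} (hY : MemVpLqr μ ℱ T p q r Y) (hq : 0 < q) {u v : ℝ}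
    (hu : 0 ≤ u) (huv : u ≤ v) (hv : v ≤ T) :
    MemLp (fun ω => Y v ω - Y u ω) (ENNReal.ofReal q) μ := by
  refine (integrable_norm_rpow_iff ((hY.1 v ⟨hu.trans huv, hv⟩).sub (hY.1 u ⟨hu, huv.trans hv⟩))
    (by simpa using hq) ENNReal.ofReal_ne_top).1 ?_
  simpa [ENNReal.toReal_ofReal hq.le] using hY.2.1 hu huv hv

theorem statement7_general
    {Ω : Type*} {m0 : MeasurableSpace Ω} (μ : Measure Ω) [IsProbabilityMeasure μ]
    (ℱ : MeasureTheory.Filtration ℝ m0) (T : ℝ)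
    {E : Type*} [NormedAddCommGroup E]
    (p q : ℝ) (hp : 1 ≤ p) (hq : 1 ≤ q) (ν : ℝ)
    (Y : ℝ → Ω → E) (Yn : ℕ → ℝ → Ω → E)
    (hY : MemVpLqr μ ℱ T p q 1 Y)
    (hYn : ∀ n, MemVpLqr μ ℱ T p q ⊤ (Yn n))
    (hball : ∀ n, pqrVar μ ℱ p q ⊤ (Yn n) 0 T ≤ ENNReal.ofReal ν)
    (hconv : Filter.Tendsto
      (fun n => pqrVar μ ℱ p q 1 (fun t ω => Yn n t ω - Y t ω) 0 T)
      Filter.atTop (nhds 0)) :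
    pqrVar μ ℱ p q ⊤ Y 0 T ≤ ENNReal.ofReal ν := by
  have hq0 : 0 < q := by linarith
  calc pqrVar μ ℱ p q ⊤ Y 0 T
      ≤ liminf (fun n => pqrVar μ ℱ p q ⊤ (Yn n) 0 T) atTop :=
        pqrVar_top_le_liminf (by linarith) hq
          (fun _ _ hu huv hv => hY.memLp_sub hq0 hu huv hv)
          (fun n _ _ hu huv hv => (hYn n).memLp_sub hq0 hu huv hv) hconv
    _ ≤ ENNReal.ofReal ν := liminf_le_of_frequently_le' (Frequently.of_forall hball)

/-- Lemma 2.9: the ball `𝓑^{p,q,∞}(ν)` is a closed subset of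
`V^p L^q`. -/
theorem statement7
    {Ω : Type*} {m0 : MeasurableSpace Ω} (μ : Measure Ω) [IsProbabilityMeasure μ]
    (ℱ : MeasureTheory.Filtration ℝ m0) (T : ℝ) (hT : 0 < T)
    {E : Type*} [NormedAddCommGroup E]
    (p q : ℝ) (hp : 1 ≤ p) (hq : 1 ≤ q) (ν : ℝ) (hν : 0 < ν)
    (Y : ℝ → Ω → E) (Yn : ℕ → ℝ → Ω → E)
    (hY : MemVpLqr μ ℱ T p q 1 Y)
    (hYn : ∀ n, MemVpLqr μ ℱ T p q ⊤ (Yn n))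
    (hball : ∀ n, pqrVar μ ℱ p q ⊤ (Yn n) 0 T ≤ ENNReal.ofReal ν)
    (hconv : Filter.Tendsto
      (fun n => pqrVar μ ℱ p q 1 (fun t ω => Yn n t ω - Y t ω) 0 T)
      Filter.atTop (nhds 0)) :
    pqrVar μ ℱ p q ⊤ Y 0 T ≤ ENNReal.ofReal ν :=
  statement7_general μ ℱ T p q hp hq ν Y Yn hY hYn hball hconv
end
end
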